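/- arXiv:1202.0307 — 2 statements merged into one kernel-verified Lean document; each statement's English description precedes it below -/
import Mathlib

section
/- Let Q_1,Q_2,Q_3,Q_4 ≥ 0 with Q_1+Q_2+Q_3+Q_4 = 1 and let q_0, q_1 be probability vectors on a finite alphabet. Then H((Q_1+Q_2)q_0 + (Q_3+Q_4)q_1) + H((Q_1+Q_3)q_0 + (Q_2+Q_4)q_1) ≥ H(Q_1 q_0 + (Q_2+Q_3+Q_4)q_1) + H((Q_1+Q_2+Q_3)q_0 + Q_4 q_1). -/
/-- Shannon entropy (base 2) of a vector of probabilities. -/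
noncomputable def ent {J : ℕ} (p : Fin J → ℝ) : ℝ :=
  -∑ j, p j * Real.logb 2 (p j)

/-!
Entropy is a sum of the concave function `negMulLog` over the coordinates, and in each coordinate
the four mixtures are the values of the affine map `t ↦ t q₀ + (1 - t) q₁` at the weights
`Q₁ ≤ Q₁ + Q₂, Q₁ + Q₃ ≤ Q₁ + Q₂ + Q₃`. The outer pair of weights has the same sum as the inner
pair, so concavity of `negMulLog` along that line puts the outer pair's values below the inner one's.
-/

theorem ConcaveOn.add_le_add_of_le_of_add_eq {s : Set ℝ} {f : ℝ → ℝ} (hf : ConcaveOn ℝ s f)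
    {x y z w : ℝ} (hx : x ∈ s) (hw : w ∈ s) (hxy : x ≤ y) (hyw : y ≤ w)
    (hsum : x + w = y + z) : f x + f w ≤ f y + f z := by
  rcases (hxy.trans hyw).eq_or_lt with hxw | hxw
  · obtain rfl : y = x := le_antisymm (hyw.trans hxw.ge) hxy
    obtain rfl : z = w := by linarith
    rfl
  -- `y` and `z` are the convex combinations of `x, w` with swapped weights `1 - t, t`.
  set t := (y - x) / (w - x)
  have ht : t * (w - x) = y - x := div_mul_cancel₀ _ (sub_ne_zero.2 hxw.ne')
  have ht0 : 0 ≤ t := div_nonneg (by linarith) (by linarith)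
  have ht1 : t ≤ 1 := (div_le_one (by linarith)).2 (by linarith)
  have hy := hf.2 hx hw (sub_nonneg.2 ht1) ht0 (by ring)
  have hz := hf.2 hx hw ht0 (sub_nonneg.2 ht1) (by ring)
  simp only [smul_eq_mul] at hy hz
  rw [show (1 - t) * x + t * w = y by linear_combination ht] at hy
  rw [show t * x + (1 - t) * w = z by linear_combination hsum - ht] at hz
  linarith

theorem concaveOn_negMulLog_lineMap {u v : ℝ} (hu : 0 ≤ u) (hv : 0 ≤ v) :
    ConcaveOn ℝ (Set.Icc 0 1) (Real.negMulLog ∘ (AffineMap.lineMap v u : ℝ →ᵃ[ℝ] ℝ)) := by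
  refine (Real.concaveOn_negMulLog.comp_affineMap _).subset (fun t ⟨ht0, ht1⟩ => ?_)
    (convex_Icc 0 1)
  simp only [Set.mem_preimage, Set.mem_Ici, AffineMap.lineMap_apply_ring]
  have := mul_nonneg (sub_nonneg.2 ht1) hv
  have := mul_nonneg ht0 hu
  linarith

theorem ent_eq_sum_negMulLog_div {J : ℕ} (p : Fin J → ℝ) :
    ent p = (∑ j, Real.negMulLog (p j)) / Real.log 2 := by
  simp only [ent, Finset.sum_div, ← Finset.sum_neg_distrib, Real.negMulLog, Real.logb]
  refine Finset.sum_congr rfl fun j _ => ?_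
  ring

theorem stmt2_general (J : ℕ) (q0 q1 : Fin J → ℝ)
    (hq0_nonneg : ∀ j, 0 ≤ q0 j) (hq1_nonneg : ∀ j, 0 ≤ q1 j)
    (Q1 Q2 Q3 Q4 : ℝ) (h1 : 0 ≤ Q1) (h2 : 0 ≤ Q2) (h3 : 0 ≤ Q3) (h4 : 0 ≤ Q4)
    (hsum : Q1 + Q2 + Q3 + Q4 = 1) :
    ent (fun j => Q1 * q0 j + (Q2 + Q3 + Q4) * q1 j) +
      ent (fun j => (Q1 + Q2 + Q3) * q0 j + Q4 * q1 j) ≤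
    ent (fun j => (Q1 + Q2) * q0 j + (Q3 + Q4) * q1 j) +
      ent (fun j => (Q1 + Q3) * q0 j + (Q2 + Q4) * q1 j) := by
  obtain rfl : Q4 = 1 - Q1 - Q2 - Q3 := by linarith
  simp only [ent_eq_sum_negMulLog_div, ← add_div, ← Finset.sum_add_distrib]
  refine div_le_div_of_nonneg_right (Finset.sum_le_sum fun j _ => ?_) (by positivity)
  have key :=
    (concaveOn_negMulLog_lineMap (hq0_nonneg j) (hq1_nonneg j)).add_le_add_of_le_of_add_eq
      (x := Q1) (y := Q1 + Q2) (z := Q1 + Q3) (w := Q1 + Q2 + Q3)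
      ⟨h1, by linarith⟩ ⟨by linarith, by linarith⟩ (by linarith) (by linarith) (by ring)
  simp only [Function.comp_apply, AffineMap.lineMap_apply_ring] at key
  convert key using 3 <;> first | rfl | ring

theorem stmt2 (J : ℕ) (q0 q1 : Fin J → ℝ)
    (hq0_nonneg : ∀ j, 0 ≤ q0 j) (hq1_nonneg : ∀ j, 0 ≤ q1 j)
    (hq0_sum : ∑ j, q0 j = 1) (hq1_sum : ∑ j, q1 j = 1)
    (Q1 Q2 Q3 Q4 : ℝ) (h1 : 0 ≤ Q1) (h2 : 0 ≤ Q2) (h3 : 0 ≤ Q3) (h4 : 0 ≤ Q4)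
    (hsum : Q1 + Q2 + Q3 + Q4 = 1) :
    ent (fun j => Q1 * q0 j + (Q2 + Q3 + Q4) * q1 j) +
      ent (fun j => (Q1 + Q2 + Q3) * q0 j + Q4 * q1 j) ≤
    ent (fun j => (Q1 + Q2) * q0 j + (Q3 + Q4) * q1 j) +
      ent (fun j => (Q1 + Q3) * q0 j + (Q2 + Q4) * q1 j) :=
  stmt2_general J q0 q1 hq0_nonneg hq1_nonneg Q1 Q2 Q3 Q4 h1 h2 h3 h4 hsum
end

section
/- Let L = lcm over s of C(F,s) and m_s = L/C(F,s). Write m_s = a(F−s) + b with 0 ≤ b ≤ F−s−1 and m_{s+1} = c(s+1) + d with 0 ≤ d ≤ s. Then b·C(F,s) = d·C(F,s+1). -/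
theorem stmt11 (F s : ℕ) (hs : s < F) (L : ℕ)
    (hL : L = (Finset.range (F + 1)).lcm (fun k => F.choose k))
    (a b c d : ℕ)
    (hb : L / F.choose s = a * (F - s) + b) (hb' : b < F - s)
    (hd : L / F.choose (s + 1) = c * (s + 1) + d) (hd' : d < s + 1) :
    b * F.choose s = d * F.choose (s + 1) := by
  have hCs : 0 < F.choose s := Nat.choose_pos (le_of_lt hs)
  have hCs1 : 0 < F.choose (s + 1) := Nat.choose_pos hs
  have hdvd1 : F.choose s ∣ L := by
    rw [hL]; exact Finset.dvd_lcm (Finset.mem_range.mpr (by omega))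
  have hdvd2 : F.choose (s + 1) ∣ L := by
    rw [hL]; exact Finset.dvd_lcm (Finset.mem_range.mpr (by omega))
  have h1 : L = a * (F - s) * F.choose s + b * F.choose s := by
    rw [← Nat.div_mul_cancel hdvd1, hb, add_mul]
  have h2 : L = c * (s + 1) * F.choose (s + 1) + d * F.choose (s + 1) := by
    rw [← Nat.div_mul_cancel hdvd2, hd, add_mul]
  have key : F.choose (s + 1) * (s + 1) = F.choose s * (F - s) :=
    Nat.choose_succ_right_eq F s
  set M := (s + 1) * F.choose (s + 1) with hM
  have hM1 : a * (F - s) * F.choose s = a * M := by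
    rw [mul_assoc, mul_comm (F - s), ← key, hM]; ring
  have hM2 : c * (s + 1) * F.choose (s + 1) = c * M := by rw [hM]; ring
  have hb2 : b * F.choose s < M := by
    calc b * F.choose s < (F - s) * F.choose s := by
          exact (Nat.mul_lt_mul_right hCs).mpr hb'
      _ = M := by rw [hM, mul_comm (s+1), key, mul_comm]
  have hd2 : d * F.choose (s + 1) < M := by
    rw [hM]; exact (Nat.mul_lt_mul_right hCs1).mpr hd'
  have e1 : L = a * M + b * F.choose s := by rw [h1, hM1]
  have e2 : L = c * M + d * F.choose (s + 1) := by rw [h2, hM2]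
  have : b * F.choose s = L % M := by
    rw [e1, Nat.add_comm (a * M), Nat.add_mul_mod_self_right, Nat.mod_eq_of_lt hb2]
  have that : d * F.choose (s + 1) = L % M := by
    rw [e2, Nat.add_comm (c * M), Nat.add_mul_mod_self_right, Nat.mod_eq_of_lt hd2]
  rw [this, that]
end
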